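/- arXiv:1404.2745 — 2 statements merged into one kernel-verified Lean document; each statement's English description precedes it below -/
import Mathlib

section
/- Fix λ > 0 and a continuous L : [0,T] → ℝ, and set Z(t) = -(L * e_0)(t) where e_0(t) = e^{-λt} and (f*g)(t) = ∫₀ᵗ f(t-s)g(s) ds. Then for every k ≥ 1 and t ∈ [0,T], the k-fold convolution power satisfies Z^{*k}(t) = (-1)ᵏ (L^{*k} * e_{k-1})(t), where e_j(t) = (tʲ/j!) e^{-λ t}. -/
open MeasureTheory

/-- Convolution on `[0,t]`: `(f*g)(t) = ∫₀ᵗ f(t-s) g(s) ds`. -/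
noncomputable def conv (f g : ℝ → ℝ) : ℝ → ℝ :=
  fun t => ∫ s in (0:ℝ)..t, f (t - s) * g s

/-- Iterated convolution powers: `convPow f n = f^{*(n+1)}`. -/
noncomputable def convPow (f : ℝ → ℝ) : ℕ → ℝ → ℝ
  | 0 => f
  | n + 1 => conv f (convPow f n)

/-- `e_j(t) = (tʲ/j!) e^{-λ t}`. -/
noncomputable def ek (lam : ℝ) (j : ℕ) : ℝ → ℝ :=
  fun t => t ^ j / (Nat.factorial j : ℝ) * Real.exp (-lam * t)

open Set

section Aux

lemma conv_congr {f f' g g' : ℝ → ℝ} {t : ℝ} (ht : 0 ≤ t)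
    (hf : ∀ s ∈ Icc (0:ℝ) t, f s = f' s) (hg : ∀ s ∈ Icc (0:ℝ) t, g s = g' s) :
    conv f g t = conv f' g' t := by
  unfold conv
  apply intervalIntegral.integral_congr
  intro s hs
  rw [uIcc_of_le ht] at hs
  have h1 : t - s ∈ Icc (0:ℝ) t := ⟨by linarith [hs.2], by linarith [hs.1]⟩
  simp only [hf _ h1, hg _ hs]

lemma conv_comm (f g : ℝ → ℝ) (t : ℝ) : conv f g t = conv g f t := by
  unfold conv
  have : (∫ s in (0:ℝ)..t, f (t - s) * g s) = ∫ s in (0:ℝ)..t, (fun u => f u * g (t - u)) (t - s) := by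
    apply intervalIntegral.integral_congr; intro s hs; simp
  rw [this, intervalIntegral.integral_comp_sub_left (fun u => f u * g (t - u)) t]
  simp [mul_comm]

lemma conv_continuous {f g : ℝ → ℝ} (hf : Continuous f) (hg : Continuous g) :
    Continuous (conv f g) := by
  unfold conv
  exact intervalIntegral.continuous_parametric_intervalIntegral_of_continuous
    (by fun_prop) continuous_id

lemma ek_continuous (lam : ℝ) (j : ℕ) : Continuous (ek lam j) := by
  unfold ek
  fun_prop

lemma convPow_continuous {f : ℝ → ℝ} (hf : Continuous f) (n : ℕ) :
    Continuous (convPow f n) := by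
  induction n with
  | zero => exact hf
  | succ n ih => exact conv_continuous hf ih

lemma triangle_swap {F : ℝ → ℝ → ℝ} (hF : Continuous (Function.uncurry F)) {t : ℝ} (ht : 0 ≤ t) :
    (∫ u in (0:ℝ)..t, ∫ s in u..t, F s u) = ∫ s in (0:ℝ)..t, ∫ u in (0:ℝ)..s, F s u := by
  set G : ℝ × ℝ → ℝ := fun p => Set.indicator {q : ℝ × ℝ | q.1 < q.2} (fun q => F q.2 q.1) p with hG
  have hGmeas : StronglyMeasurable G := by
    apply StronglyMeasurable.indicator
    · exact (hF.comp (continuous_snd.prodMk continuous_fst)).stronglyMeasurable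
    · exact measurableSet_lt measurable_fst measurable_snd
  obtain ⟨C, hC⟩ : ∃ C, ∀ p ∈ Icc (0:ℝ) t ×ˢ Icc (0:ℝ) t, ‖F p.2 p.1‖ ≤ C := by
    obtain ⟨C, hC⟩ := (isCompact_Icc.prod isCompact_Icc).exists_bound_of_continuousOn
      ((hF.comp (continuous_snd.prodMk continuous_fst)).continuousOn)
    exact ⟨C, hC⟩
  have hμ : (volume.restrict (Ioc (0:ℝ) t)).prod (volume.restrict (Ioc (0:ℝ) t))
      = (volume.prod volume).restrict (Ioc (0:ℝ) t ×ˢ Ioc (0:ℝ) t) :=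
    Measure.prod_restrict _ _
  have hGint : Integrable G ((volume.restrict (Ioc (0:ℝ) t)).prod (volume.restrict (Ioc (0:ℝ) t))) := by
    refine ⟨hGmeas.aestronglyMeasurable, ?_⟩
    apply HasFiniteIntegral.of_bounded (C := C)
    rw [hμ]
    filter_upwards [ae_restrict_mem (measurableSet_Ioc.prod measurableSet_Ioc)] with p hp
    have hp' : p ∈ Icc (0:ℝ) t ×ˢ Icc (0:ℝ) t :=
      ⟨Ioc_subset_Icc_self hp.1, Ioc_subset_Icc_self hp.2⟩
    calc ‖G p‖ ≤ ‖F p.2 p.1‖ := by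
          rw [hG]; exact norm_indicator_le_norm_self _ p
      _ ≤ C := hC p hp'
  have swap := integral_integral_swap (f := fun u s => G (u, s)) (μ := volume.restrict (Ioc (0:ℝ) t))
    (ν := volume.restrict (Ioc (0:ℝ) t)) (by exact hGint)
  have hL : (∫ u in (0:ℝ)..t, ∫ s in u..t, F s u)
      = ∫ u in Ioc (0:ℝ) t, ∫ s in Ioc (0:ℝ) t, G (u, s) := by
    rw [intervalIntegral.integral_of_le ht]
    apply setIntegral_congr_fun measurableSet_Ioc
    intro u hu
    show (∫ s in u..t, F s u) = ∫ s in Ioc (0:ℝ) t, G (u, s)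
    have : (∫ s in Ioc (0:ℝ) t, G (u, s)) = ∫ s in Ioc (0:ℝ) t ∩ Ioi u, F s u := by
      rw [← setIntegral_indicator measurableSet_Ioi]
      apply setIntegral_congr_fun measurableSet_Ioc
      intro s _
      simp only [hG, Set.indicator, mem_setOf_eq, mem_Ioi]
    rw [intervalIntegral.integral_of_le hu.2, this]
    congr 1
    rw [Set.Ioc_inter_Ioi, max_eq_right hu.1.le]
  have hR : (∫ s in (0:ℝ)..t, ∫ u in (0:ℝ)..s, F s u)
      = ∫ s in Ioc (0:ℝ) t, ∫ u in Ioc (0:ℝ) t, G (u, s) := by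
    rw [intervalIntegral.integral_of_le ht]
    apply setIntegral_congr_fun measurableSet_Ioc
    intro s hs
    show (∫ u in (0:ℝ)..s, F s u) = ∫ u in Ioc (0:ℝ) t, G (u, s)
    have : (∫ u in Ioc (0:ℝ) t, G (u, s)) = ∫ u in Ioc (0:ℝ) t ∩ Iio s, F s u := by
      rw [← setIntegral_indicator measurableSet_Iio]
      apply setIntegral_congr_fun measurableSet_Ioc
      intro u _
      simp only [hG, Set.indicator, mem_setOf_eq, mem_Iio]
    have hset : Ioc (0:ℝ) t ∩ Iio s = Ioo 0 s := by
      ext u; simp only [mem_inter_iff, mem_Ioc, mem_Iio, mem_Ioo]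
      constructor
      · rintro ⟨⟨h1, _⟩, h3⟩; exact ⟨h1, h3⟩
      · rintro ⟨h1, h2⟩; exact ⟨⟨h1, le_trans h2.le hs.2⟩, h2⟩
    rw [intervalIntegral.integral_of_le hs.1.le, this, hset, integral_Ioc_eq_integral_Ioo]
  rw [hL, hR, swap]

lemma conv_assoc {f g h : ℝ → ℝ} (hf : Continuous f) (hg : Continuous g) (hh : Continuous h)
    {t : ℝ} (ht : 0 ≤ t) : conv (conv f g) h t = conv f (conv g h) t := by
  have key : ∀ u : ℝ, conv f g (t - u) * h u = ∫ s in u..t, f (t - s) * g (s - u) * h u := by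
    intro u
    have h1 : conv f g (t - u) = ∫ s in u..t, f (t - s) * g (s - u) := by
      unfold conv
      have : (∫ v in (0:ℝ)..(t-u), f (t - u - v) * g v)
          = ∫ v in (0:ℝ)..(t-u), (fun s => f (t - s) * g (s - u)) (v + u) := by
        apply intervalIntegral.integral_congr
        intro v _
        simp only
        ring_nf
      rw [this, intervalIntegral.integral_comp_add_right (fun s => f (t - s) * g (s - u)) u]
      norm_num
    rw [h1, ← intervalIntegral.integral_mul_const]
  have lhs : conv (conv f g) h t = ∫ u in (0:ℝ)..t, ∫ s in u..t, f (t - s) * g (s - u) * h u := by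
    unfold conv
    apply intervalIntegral.integral_congr
    intro u _
    exact key u
  have rhs : conv f (conv g h) t = ∫ s in (0:ℝ)..t, ∫ u in (0:ℝ)..s, f (t - s) * g (s - u) * h u := by
    unfold conv
    apply intervalIntegral.integral_congr
    intro s _
    simp only
    rw [← intervalIntegral.integral_const_mul]
    apply intervalIntegral.integral_congr
    intro u _
    ring
  rw [lhs, rhs]
  exact triangle_swap (F := fun s u => f (t - s) * g (s - u) * h u) (by fun_prop) ht

lemma conv_ek (lam : ℝ) (n : ℕ) (t : ℝ) : conv (ek lam 0) (ek lam n) t = ek lam (n + 1) t := by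
  unfold conv ek
  have : (∫ s in (0:ℝ)..t, (t - s) ^ 0 / (Nat.factorial 0 : ℝ) * Real.exp (-lam * (t - s)) *
        (s ^ n / (Nat.factorial n : ℝ) * Real.exp (-lam * s)))
      = ∫ s in (0:ℝ)..t, (Real.exp (-lam * t) / (Nat.factorial n : ℝ)) * s ^ n := by
    apply intervalIntegral.integral_congr
    intro s _
    simp only [pow_zero, Nat.factorial_zero, Nat.cast_one, div_one]
    have he : Real.exp (-lam * (t - s)) * Real.exp (-lam * s) = Real.exp (-lam * t) := by
      rw [← Real.exp_add]; ring_nf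
    calc 1 * Real.exp (-lam * (t - s)) * (s ^ n / (Nat.factorial n : ℝ) * Real.exp (-lam * s))
        = (Real.exp (-lam * (t - s)) * Real.exp (-lam * s)) * (s ^ n / (Nat.factorial n : ℝ)) := by ring
      _ = Real.exp (-lam * t) / (Nat.factorial n : ℝ) * s ^ n := by rw [he]; ring
  rw [this, intervalIntegral.integral_const_mul, integral_pow]
  have h1 : (Nat.factorial n : ℝ) ≠ 0 := Nat.cast_ne_zero.2 (Nat.factorial_ne_zero n)
  have h2 : ((n:ℝ) + 1) ≠ 0 := by positivity
  rw [Nat.factorial_succ]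
  push_cast
  field_simp
  ring

/-- Key rearrangement: `(f * e₀) * (M * eₙ) = (f * M) * e_{n+1}` for continuous `f, M`. -/
lemma conv_rearrange (lam : ℝ) (n : ℕ) {f M : ℝ → ℝ} (hf : Continuous f) (hM : Continuous M)
    {t : ℝ} (ht : 0 ≤ t) :
    conv (conv f (ek lam 0)) (conv M (ek lam n)) t = conv (conv f M) (ek lam (n + 1)) t := by
  have he0 := ek_continuous lam 0
  have hen := ek_continuous lam n
  have hW : Continuous (conv M (ek lam n)) := conv_continuous hM hen
  rw [conv_assoc hf he0 hW ht]
  have step2 : ∀ s ∈ Icc (0:ℝ) t, conv (ek lam 0) (conv M (ek lam n)) s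
      = conv M (ek lam (n + 1)) s := by
    intro s hs
    have hs0 : (0:ℝ) ≤ s := hs.1
    rw [← conv_assoc he0 hM hen hs0]
    have : conv (conv (ek lam 0) M) (ek lam n) s = conv (conv M (ek lam 0)) (ek lam n) s :=
      conv_congr hs0 (fun u _ => conv_comm _ _ u) (fun _ _ => rfl)
    rw [this, conv_assoc hM he0 hen hs0]
    exact conv_congr hs0 (fun _ _ => rfl) (fun u _ => conv_ek lam n u)
  rw [conv_congr ht (fun _ _ => rfl) step2, ← conv_assoc hf hM (ek_continuous lam (n+1)) ht]

/-- The main formula for globally continuous `L`. -/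
lemma main_cont (lam : ℝ) {L : ℝ → ℝ} (hL : Continuous L) (n : ℕ) :
    ∀ t : ℝ, 0 ≤ t →
      convPow (fun τ => -(conv L (ek lam 0) τ)) n t
        = (-1 : ℝ) ^ (n + 1) * conv (convPow L n) (ek lam n) t := by
  induction n with
  | zero => intro t ht; simp [convPow]
  | succ n ih =>
    intro t ht
    have step : convPow (fun τ => -(conv L (ek lam 0) τ)) (n + 1) t
        = (-1 : ℝ) ^ (n + 2) *
          conv (conv L (ek lam 0)) (conv (convPow L n) (ek lam n)) t := by
      have e1 : convPow (fun τ => -(conv L (ek lam 0) τ)) (n + 1) t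
          = ∫ s in (0:ℝ)..t, -(conv L (ek lam 0) (t - s)) *
              convPow (fun τ => -(conv L (ek lam 0) τ)) n s := rfl
      have e2 : conv (conv L (ek lam 0)) (conv (convPow L n) (ek lam n)) t
          = ∫ s in (0:ℝ)..t, conv L (ek lam 0) (t - s) * conv (convPow L n) (ek lam n) s := rfl
      rw [e1, e2, ← intervalIntegral.integral_const_mul]
      apply intervalIntegral.integral_congr
      intro s hs
      rw [uIcc_of_le ht] at hs
      show -conv L (ek lam 0) (t - s) * convPow (fun τ => -(conv L (ek lam 0) τ)) n s
          = (-1:ℝ) ^ (n + 2) * (conv L (ek lam 0) (t - s) * conv (convPow L n) (ek lam n) s)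
      rw [ih s hs.1]
      ring
    rw [step, conv_rearrange lam n hL (convPow_continuous hL n) ht]
    rfl

lemma convPow_congr {T : ℝ} {f f' : ℝ → ℝ} (h : ∀ s ∈ Icc (0:ℝ) T, f s = f' s) (n : ℕ) :
    ∀ t ∈ Icc (0:ℝ) T, convPow f n t = convPow f' n t := by
  induction n with
  | zero => exact h
  | succ n ih =>
    intro t ht
    show conv f (convPow f n) t = conv f' (convPow f' n) t
    apply conv_congr ht.1
    · exact fun s hs => h s ⟨hs.1, hs.2.trans ht.2⟩
    · exact fun s hs => ih s ⟨hs.1, hs.2.trans ht.2⟩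

end Aux

/-- For `Z = -(L * e₀)`, the `k`-fold convolution power (with `k = n + 1`) satisfies
`Z^{*k}(t) = (-1)ᵏ (L^{*k} * e_{k-1})(t)` on `[0,T]`. -/
theorem convPow_Z_formula (T lam : ℝ) (hT : 0 < T) (hlam : 0 < lam)
    (L : ℝ → ℝ) (hL : ContinuousOn L (Set.Icc 0 T)) :
    ∀ n : ℕ, ∀ t ∈ Set.Icc (0:ℝ) T,
      convPow (fun τ => -(conv L (ek lam 0) τ)) n t
        = (-1 : ℝ) ^ (n + 1) * conv (convPow L n) (ek lam n) t := by
  set L' : ℝ → ℝ := Set.IccExtend hT.le ((Set.Icc (0:ℝ) T).restrict L) with hL'def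
  have hL' : Continuous L' := continuous_IccExtend_iff.2 hL.restrict
  have heq : ∀ s ∈ Icc (0:ℝ) T, L s = L' s := by
    intro s hs
    rw [hL'def, Set.IccExtend_of_mem hT.le _ hs]
    rfl
  intro n t ht
  have hZeq : ∀ s ∈ Icc (0:ℝ) T, (fun τ => -(conv L (ek lam 0) τ)) s
      = (fun τ => -(conv L' (ek lam 0) τ)) s := by
    intro s hs
    simp only [neg_inj]
    exact conv_congr hs.1 (fun u hu => heq u ⟨hu.1, hu.2.trans hs.2⟩) (fun _ _ => rfl)
  rw [convPow_congr hZeq n t ht, main_cont lam hL' n t ht.1]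
  congr 1
  exact (conv_congr ht.1
    (fun s hs => convPow_congr heq n s ⟨hs.1, hs.2.trans ht.2⟩)
    (fun _ _ => rfl)).symm
end

section
/- Let λ > 0, T > 0, and let L be continuous on [0,T] with |L| ≤ M₀. Let H(t) = -∫₀ᵗ (Σ_{k=1}^∞ L^{*k}(t-s) s^{k-1}/(k-1)!) e^{-λ s} ds. Then there is a constant C_T depending only on T and M₀ (not on λ) such that |H(t)| ≤ C_T / λ for all t ∈ [0,T]. -/
open MeasureTheory

/-!
The series `∑ₙ L^{*(n+1)}(t-s) sⁿ/n!` is dominated on `[0,T]` by `M₀ ∑ₙ (M₀T²)ⁿ/n! = M₀ e^{M₀T²}`,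
since `|L^{*(n+1)}| ≤ M₀ (M₀T)ⁿ` there; all the dependence on `λ` then sits in the weight,
and `∫₀ᵗ e^{-λs} ds ≤ 1/λ`.
-/

open Real Set
open scoped Nat

lemma abs_convPow_le {L : ℝ → ℝ} {T M : ℝ} (hL : ∀ t ∈ Icc 0 T, |L t| ≤ M) :
    ∀ (n : ℕ), ∀ u ∈ Icc 0 T, |convPow L n u| ≤ M * (M * T) ^ n := by
  intro n
  induction n with
  | zero => simpa [convPow] using hL
  | succ n ih =>
    rintro u ⟨hu0, huT⟩
    have hM : 0 ≤ M := (abs_nonneg _).trans (hL 0 ⟨le_rfl, hu0.trans huT⟩)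
    have hMn : 0 ≤ M * (M * T) ^ n := (abs_nonneg _).trans (ih u ⟨hu0, huT⟩)
    have hintegrand : ∀ s ∈ uIoc 0 u, ‖L (u - s) * convPow L n s‖ ≤ M * (M * (M * T) ^ n) := by
      intro s hs
      rw [uIoc_of_le hu0] at hs
      obtain ⟨hs0, hsu⟩ := hs
      rw [Real.norm_eq_abs, abs_mul]
      exact mul_le_mul (hL _ ⟨by linarith, by linarith⟩) (ih s ⟨hs0.le, hsu.trans huT⟩)
        (abs_nonneg _) hM
    calc |convPow L (n + 1) u| = ‖∫ s in (0:ℝ)..u, L (u - s) * convPow L n s‖ := rfl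
      _ ≤ M * (M * (M * T) ^ n) * |u - 0| :=
        intervalIntegral.norm_integral_le_of_norm_le_const hintegrand
      _ ≤ M * (M * (M * T) ^ n) * T := by
        rw [sub_zero, abs_of_nonneg hu0]
        exact mul_le_mul_of_nonneg_left huT (mul_nonneg hM hMn)
      _ = M * (M * T) ^ (n + 1) := by ring

lemma abs_tsum_convPow_mul_pow_div_factorial_le {L : ℝ → ℝ} {T M : ℝ}
    (hL : ∀ t ∈ Icc 0 T, |L t| ≤ M) {u s : ℝ} (hu : u ∈ Icc 0 T) (hs : s ∈ Icc 0 T) :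
    |∑' n : ℕ, convPow L n u * s ^ n / (n ! : ℝ)| ≤ M * exp (M * T * T) := by
  have hexp : HasSum (fun n : ℕ => M * ((M * T * T) ^ n / (n ! : ℝ))) (M * exp (M * T * T)) := by
    have := NormedSpace.expSeries_div_hasSum_exp (M * T * T)
    rw [← Real.exp_eq_exp_ℝ] at this
    exact this.mul_left M
  rw [← Real.norm_eq_abs]
  refine tsum_of_norm_bounded hexp fun n => ?_
  have hLn := abs_convPow_le hL n u hu
  have hsn : |s ^ n| ≤ T ^ n := by
    rw [abs_pow, abs_of_nonneg hs.1]
    exact pow_le_pow_left₀ hs.1 hs.2 n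
  calc ‖convPow L n u * s ^ n / (n ! : ℝ)‖ = |convPow L n u| * |s ^ n| / (n ! : ℝ) := by
        rw [Real.norm_eq_abs, abs_div, abs_mul, Nat.abs_cast]
    _ ≤ M * (M * T) ^ n * T ^ n / (n ! : ℝ) := by
        gcongr
        exact (abs_nonneg _).trans hLn
    _ = M * ((M * T * T) ^ n / (n ! : ℝ)) := by rw [mul_pow (M * T)]; ring

lemma integral_exp_neg_mul {lam : ℝ} (hlam : lam ≠ 0) (t : ℝ) :
    ∫ s in (0:ℝ)..t, exp (-lam * s) = (1 - exp (-lam * t)) / lam := by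
  rw [intervalIntegral.integral_comp_mul_left exp (neg_ne_zero.mpr hlam), integral_exp,
    mul_zero, exp_zero, smul_eq_mul]
  field_simp
  ring

lemma abs_integral_mul_exp_neg_le {g : ℝ → ℝ} {C lam t : ℝ} (hlam : 0 < lam) (ht : 0 ≤ t)
    (hC : 0 ≤ C) (hg : ∀ s ∈ Icc 0 t, |g s| ≤ C) :
    |∫ s in (0:ℝ)..t, g s * exp (-lam * s)| ≤ C / lam := by
  have hbound : ∀ᵐ s ∂volume.restrict (uIoc 0 t), ‖g s * exp (-lam * s)‖ ≤ C * exp (-lam * s) := by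
    refine (ae_restrict_iff' measurableSet_uIoc).mpr (Filter.Eventually.of_forall ?_)
    intro s hs
    rw [uIoc_of_le ht] at hs
    rw [norm_mul, Real.norm_eq_abs, Real.norm_eq_abs, abs_of_pos (exp_pos _)]
    exact mul_le_mul_of_nonneg_right (hg s (Ioc_subset_Icc_self hs)) (exp_pos _).le
  have hexp_le_one : exp (-lam * t) ≤ 1 := exp_le_one_iff.mpr (by nlinarith)
  calc |∫ s in (0:ℝ)..t, g s * exp (-lam * s)|
      ≤ |∫ s in (0:ℝ)..t, C * exp (-lam * s)| :=
        intervalIntegral.norm_integral_le_abs_of_norm_le hbound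
          ((continuous_const.mul (by fun_prop)).intervalIntegrable _ _)
    _ = C * ((1 - exp (-lam * t)) / lam) := by
        rw [intervalIntegral.integral_const_mul, integral_exp_neg_mul hlam.ne',
          abs_of_nonneg (mul_nonneg hC (div_nonneg (by linarith) hlam.le))]
    _ ≤ C / lam := by
        rw [mul_div_assoc']
        gcongr
        exact mul_le_of_le_one_right hC (by linarith [exp_pos (-lam * t)])

theorem resolvent_H_bound_general (T M₀ : ℝ) :
    ∃ C : ℝ, ∀ lam : ℝ, 0 < lam → ∀ L : ℝ → ℝ,
      ContinuousOn L (Set.Icc 0 T) → (∀ t ∈ Set.Icc (0:ℝ) T, |L t| ≤ M₀) →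
      ∀ t ∈ Set.Icc (0:ℝ) T,
        |(-(∫ s in (0:ℝ)..t,
            (∑' n : ℕ, convPow L n (t - s) * s ^ n / (Nat.factorial n : ℝ))
              * Real.exp (-lam * s)))| ≤ C / lam := by
  refine ⟨M₀ * exp (M₀ * T * T), fun lam hlam L _ hL t ⟨ht0, htT⟩ => ?_⟩
  have hM₀ : 0 ≤ M₀ := (abs_nonneg _).trans (hL 0 ⟨le_rfl, ht0.trans htT⟩)
  rw [abs_neg]
  refine abs_integral_mul_exp_neg_le hlam ht0 (by positivity) fun s ⟨hs0, hst⟩ => ?_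
  exact abs_tsum_convPow_mul_pow_div_factorial_le hL ⟨by linarith, by linarith⟩ ⟨hs0, by linarith⟩

/-- For `H(t) = -∫₀ᵗ (Σ_{k≥1} L^{*k}(t-s) s^{k-1}/(k-1)!) e^{-λs} ds` there is a
constant `C` depending only on `T` and `M₀` (not on `λ` nor on `L`) such that
`|H(t)| ≤ C / λ` on `[0,T]`. -/
theorem resolvent_H_bound (T M₀ : ℝ) (hT : 0 < T) (hM₀ : 0 ≤ M₀) :
    ∃ C : ℝ, ∀ lam : ℝ, 0 < lam → ∀ L : ℝ → ℝ,
      ContinuousOn L (Set.Icc 0 T) → (∀ t ∈ Set.Icc (0:ℝ) T, |L t| ≤ M₀) →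
      ∀ t ∈ Set.Icc (0:ℝ) T,
        |(-(∫ s in (0:ℝ)..t,
            (∑' n : ℕ, convPow L n (t - s) * s ^ n / (Nat.factorial n : ℝ))
              * Real.exp (-lam * s)))| ≤ C / lam :=
  resolvent_H_bound_general T M₀
end
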